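/- arXiv:1901.11224 — 3 statements merged into one kernel-verified Lean document; each statement's English description precedes it below -/
import Mathlib

section
/- For 0 ≤ α ≤ 1, the function f_Nsc(x; α, m) := ((1-α)/4)·Q(x; 1, m, 2√α/(√α+1)) + (α/2)‖x‖² is (α, 1)-smooth, i.e., (α/2)‖x-y‖² ≤ f_Nsc(x) - f_Nsc(y) - ⟨∇f_Nsc(y), x-y⟩ ≤ (1/2)‖x-y‖² for all x, y ∈ ℝ^m. -/
/-!
`f_Nsc` is quadratic: `f_Nsc (y + d) = f_Nsc y + L_y d + B d` with `L_y` linear and `B` the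
homogeneous quadratic part. Hence `∇f_Nsc y = L_y`, and the Bregman divergence
`f_Nsc x - f_Nsc y - ⟪∇f_Nsc y, x - y⟫` is exactly `B (x - y)`. Writing
`B d = (1 - α)/4 · q(d) + α/2 · ‖d‖²` with `q` the homogeneous chain quadratic, it remains to
see `0 ≤ q(d) ≤ 2‖d‖²`; the upper bound follows from `(a - b)² ≤ 2a² + 2b²` and `ζ ≤ 2`.
-/

open scoped RealInnerProductSpace BigOperators

/-- Nesterov's chain quadratic `Q(x; ξ, m, ζ)` on `ℝ^{n+1}` (so `m = n+1 ≥ 1`). -/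
noncomputable def Qfun {n : ℕ} (ξ ζ : ℝ) (x : EuclideanSpace ℝ (Fin (n + 1))) : ℝ :=
  ξ / 2 * (x 0 - 1) ^ 2 + 1 / 2 * ∑ t : Fin n, (x t.succ - x t.castSucc) ^ 2
    + ζ / 2 * (x (Fin.last n)) ^ 2

/-- Nesterov's strongly convex hard function `f_Nsc(x; α, m)` on `ℝ^{n+1}`. -/
noncomputable def fNsc {n : ℕ} (α : ℝ) (x : EuclideanSpace ℝ (Fin (n + 1))) : ℝ :=
  (1 - α) / 4 * Qfun 1 (2 * Real.sqrt α / (Real.sqrt α + 1)) x + α / 2 * ‖x‖ ^ 2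

open Asymptotics Filter Topology

section QuadraticExpansion

variable {E : Type*} [NormedAddCommGroup E] [InnerProductSpace ℝ E]

theorem hasFDerivAt_of_add_eq_add_add {f B : E → ℝ} {L : E →L[ℝ] ℝ} {y : E}
    (hf : ∀ d, f (y + d) = f y + L d + B d) (hB : B =O[𝓝 0] fun d => ‖d‖ ^ 2) :
    HasFDerivAt f L y := by
  rw [hasFDerivAt_iff_isLittleO_nhds_zero]
  have hrem : (fun d => f (y + d) - f y - L d) = B := funext fun d => by rw [hf]; ring
  rw [hrem]
  exact hB.trans_isLittleO (isLittleO_norm_pow_id one_lt_two)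

theorem sub_sub_inner_gradient_eq [CompleteSpace E] {f B : E → ℝ} {L : E →L[ℝ] ℝ} {y : E}
    (hf : ∀ d, f (y + d) = f y + L d + B d) (hB : B =O[𝓝 0] fun d => ‖d‖ ^ 2) (x : E) :
    f x - f y - ⟪gradient f y, x - y⟫ = B (x - y) := by
  rw [gradient, InnerProductSpace.toDual_symm_apply,
    (hasFDerivAt_of_add_eq_add_add hf hB).fderiv]
  have hx := hf (x - y)
  rw [add_sub_cancel] at hx
  linarith

end QuadraticExpansion

section ChainQuadratic

variable {n : ℕ}

noncomputable def chainForm (ξ ζ : ℝ) (d : EuclideanSpace ℝ (Fin (n + 1))) : ℝ :=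
  ξ / 2 * d 0 ^ 2 + 1 / 2 * ∑ t : Fin n, (d t.succ - d t.castSucc) ^ 2
    + ζ / 2 * d (Fin.last n) ^ 2

noncomputable def chainDeriv (ξ ζ : ℝ) (y : EuclideanSpace ℝ (Fin (n + 1))) :
    EuclideanSpace ℝ (Fin (n + 1)) →L[ℝ] ℝ :=
  (ξ * (y 0 - 1)) • EuclideanSpace.proj 0
    + ∑ t : Fin n, (y t.succ - y t.castSucc) •
        (EuclideanSpace.proj t.succ - EuclideanSpace.proj t.castSucc)
    + (ζ * y (Fin.last n)) • EuclideanSpace.proj (Fin.last n)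

theorem chainDeriv_apply (ξ ζ : ℝ) (y d : EuclideanSpace ℝ (Fin (n + 1))) :
    chainDeriv ξ ζ y d = ξ * (y 0 - 1) * d 0
      + ∑ t : Fin n, (y t.succ - y t.castSucc) * (d t.succ - d t.castSucc)
      + ζ * y (Fin.last n) * d (Fin.last n) := by
  simp [chainDeriv]

theorem Qfun_add (ξ ζ : ℝ) (y d : EuclideanSpace ℝ (Fin (n + 1))) :
    Qfun ξ ζ (y + d) = Qfun ξ ζ y + chainDeriv ξ ζ y d + chainForm ξ ζ d := by
  have hsum : ∑ t : Fin n, (y t.succ + d t.succ - (y t.castSucc + d t.castSucc)) ^ 2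
      = ∑ t : Fin n, (y t.succ - y t.castSucc) ^ 2
        + 2 * ∑ t : Fin n, (y t.succ - y t.castSucc) * (d t.succ - d t.castSucc)
        + ∑ t : Fin n, (d t.succ - d t.castSucc) ^ 2 := by
    rw [Finset.mul_sum, ← Finset.sum_add_distrib, ← Finset.sum_add_distrib]
    exact Finset.sum_congr rfl fun t _ => by ring
  simp only [Qfun, chainDeriv_apply, chainForm, PiLp.add_apply, hsum]
  ring

theorem chainForm_nonneg {ξ ζ : ℝ} (hξ : 0 ≤ ξ) (hζ : 0 ≤ ζ)
    (d : EuclideanSpace ℝ (Fin (n + 1))) :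
    0 ≤ chainForm ξ ζ d := by
  unfold chainForm
  have : 0 ≤ ∑ t : Fin n, (d t.succ - d t.castSucc) ^ 2 :=
    Finset.sum_nonneg fun _ _ => sq_nonneg _
  positivity

theorem chainForm_le_two_mul_norm_sq {ξ ζ : ℝ} (hξ : ξ ≤ 2) (hζ : ζ ≤ 2)
    (d : EuclideanSpace ℝ (Fin (n + 1))) :
    chainForm ξ ζ d ≤ 2 * ‖d‖ ^ 2 := by
  have hnorm : ‖d‖ ^ 2 = ∑ i, d i ^ 2 := by
    simp only [EuclideanSpace.norm_sq_eq, Real.norm_eq_abs, sq_abs]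
  have hfirst : ∑ i, d i ^ 2 = d 0 ^ 2 + ∑ t : Fin n, d t.succ ^ 2 := Fin.sum_univ_succ _
  have hlast : ∑ i, d i ^ 2 = ∑ t : Fin n, d t.castSucc ^ 2 + d (Fin.last n) ^ 2 :=
    Fin.sum_univ_castSucc _
  have hdiff : ∑ t : Fin n, (d t.succ - d t.castSucc) ^ 2
      ≤ 2 * ∑ t : Fin n, d t.succ ^ 2 + 2 * ∑ t : Fin n, d t.castSucc ^ 2 := by
    rw [Finset.mul_sum, Finset.mul_sum, ← Finset.sum_add_distrib]
    exact Finset.sum_le_sum fun t _ => by nlinarith [sq_nonneg (d t.succ + d t.castSucc)]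
  unfold chainForm
  nlinarith [mul_nonneg (sub_nonneg.2 hξ) (sq_nonneg (d 0)),
    mul_nonneg (sub_nonneg.2 hζ) (sq_nonneg (d (Fin.last n)))]

end ChainQuadratic

section NesterovStronglyConvex

variable {n : ℕ}

theorem two_mul_sqrt_div_sqrt_add_one_le_two (α : ℝ) : 2 * √α / (√α + 1) ≤ 2 := by
  rw [div_le_iff₀ (by positivity)]
  linarith

noncomputable def fNscForm (α : ℝ) (d : EuclideanSpace ℝ (Fin (n + 1))) : ℝ :=
  (1 - α) / 4 * chainForm 1 (2 * √α / (√α + 1)) d + α / 2 * ‖d‖ ^ 2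

noncomputable def fNscDeriv (α : ℝ) (y : EuclideanSpace ℝ (Fin (n + 1))) :
    EuclideanSpace ℝ (Fin (n + 1)) →L[ℝ] ℝ :=
  ((1 - α) / 4) • chainDeriv 1 (2 * √α / (√α + 1)) y + α • innerSL ℝ y

theorem fNsc_add (α : ℝ) (y d : EuclideanSpace ℝ (Fin (n + 1))) :
    fNsc α (y + d) = fNsc α y + fNscDeriv α y d + fNscForm α d := by
  simp only [fNsc, Qfun_add, fNscDeriv, fNscForm, add_apply,
    smul_apply, innerSL_apply_apply, smul_eq_mul, norm_add_sq_real]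
  ring

theorem mul_norm_sq_le_fNscForm {α : ℝ} (hα1 : α ≤ 1)
    (d : EuclideanSpace ℝ (Fin (n + 1))) :
    α / 2 * ‖d‖ ^ 2 ≤ fNscForm α d := by
  have hq := chainForm_nonneg (ζ := 2 * √α / (√α + 1)) zero_le_one (by positivity) d
  unfold fNscForm
  nlinarith

theorem fNscForm_le {α : ℝ} (hα1 : α ≤ 1) (d : EuclideanSpace ℝ (Fin (n + 1))) :
    fNscForm α d ≤ 1 / 2 * ‖d‖ ^ 2 := by
  have hq := chainForm_le_two_mul_norm_sq one_le_two (two_mul_sqrt_div_sqrt_add_one_le_two α) d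
  unfold fNscForm
  nlinarith

end NesterovStronglyConvex

/-- `f_Nsc(·; α, m)` is `(α, 1)`-smooth for `0 ≤ α ≤ 1`. -/
theorem fNsc_alpha_one_smooth (n : ℕ) (α : ℝ) (hα0 : 0 ≤ α) (hα1 : α ≤ 1)
    (x y : EuclideanSpace ℝ (Fin (n + 1))) :
    α / 2 * ‖x - y‖ ^ 2 ≤
        fNsc α x - fNsc α y - ⟪gradient (fNsc (n := n) α) y, x - y⟫ ∧
      fNsc α x - fNsc α y - ⟪gradient (fNsc (n := n) α) y, x - y⟫ ≤ 1 / 2 * ‖x - y‖ ^ 2 := by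
  have hform_nonneg (d : EuclideanSpace ℝ (Fin (n + 1))) : 0 ≤ fNscForm α d :=
    (by positivity : 0 ≤ α / 2 * ‖d‖ ^ 2).trans (mul_norm_sq_le_fNscForm hα1 d)
  have hform_bigO : (fNscForm (n := n) α) =O[𝓝 0] fun d => ‖d‖ ^ 2 :=
    IsBigO.of_bound (1 / 2) <| Eventually.of_forall fun d => by
      rw [Real.norm_of_nonneg (hform_nonneg d), Real.norm_of_nonneg (by positivity)]
      exact fNscForm_le hα1 d
  rw [sub_sub_inner_gradient_eq (fNsc_add α y) hform_bigO x]
  exact ⟨mul_norm_sq_le_fNscForm hα1 _, fNscForm_le hα1 _⟩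
end

section
/- For 0 < α ≤ 1 and q := (1-√α)/(1+√α), any x ∈ ℝ^m with x_m = 0 satisfies f_Nsc(x; α, m) - inf_z f_Nsc(z; α, m) ≥ (α/2)·q^{2m+2}. -/
open scoped RealInnerProductSpace BigOperators

/-!
With `q = (1 - √α)/(1 + √α)`, the point `x*` with coordinates `x*_i = q^i` (`i = 1, …, m`)
is a critical point of the quadratic `f_Nsc`: `q` is the root in `[0, 1]` of
`(1 - α)(1 - q)² = 4αq`, which is exactly the recurrence
`(1 - α)/4 · (q^{i-1} - 2q^i + q^{i+1}) = α q^i` that the gradient imposes on the coordinates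
(with `q^0 = 1` supplied by the term `(x_1 - 1)²`), and the weight `ζ = 1 - q` makes the last
coordinate fit as well. Expanding `f_Nsc` around `x*` therefore leaves only the quadratic
part, so `f_Nsc(x) ≥ f_Nsc(x*) + (α/2)‖x - x*‖²`. In particular the infimum is attained at
`x*`, and if `x_m = 0` then `‖x - x*‖² ≥ q^{2m} ≥ q^{2m+2}`.
-/

open Finset

theorem Fin.sum_univ_succ_sub_castSucc {M : Type*} [AddCommGroup M] {n : ℕ}
    (g : Fin (n + 1) → M) :
    ∑ t : Fin n, (g t.succ - g t.castSucc) = g (Fin.last n) - g 0 := by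
  rw [sum_sub_distrib, sub_eq_sub_iff_add_eq_add, add_comm, ← Fin.sum_univ_succ,
    add_comm (g (Fin.last n)), ← Fin.sum_univ_castSucc]

theorem Qfun_add_s4 {n : ℕ} (ξ ζ : ℝ) (a d : EuclideanSpace ℝ (Fin (n + 1))) :
    Qfun ξ ζ (a + d) = Qfun ξ ζ a
      + (ξ * (a 0 - 1) * d 0 + ∑ t : Fin n, (a t.succ - a t.castSucc) * (d t.succ - d t.castSucc)
        + ζ * a (Fin.last n) * d (Fin.last n))
      + (ξ / 2 * d 0 ^ 2 + 1 / 2 * ∑ t : Fin n, (d t.succ - d t.castSucc) ^ 2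
        + ζ / 2 * d (Fin.last n) ^ 2) := by
  have hsum : ∑ t : Fin n, ((a + d) t.succ - (a + d) t.castSucc) ^ 2
      = ∑ t : Fin n, (a t.succ - a t.castSucc) ^ 2
        + 2 * ∑ t : Fin n, (a t.succ - a t.castSucc) * (d t.succ - d t.castSucc)
        + ∑ t : Fin n, (d t.succ - d t.castSucc) ^ 2 := by
    rw [mul_sum, ← sum_add_distrib, ← sum_add_distrib]
    exact sum_congr rfl fun t _ => by simp only [PiLp.add_apply]; ring
  rw [Qfun, Qfun, hsum]
  simp only [PiLp.add_apply]
  ring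

noncomputable def geomVec (n : ℕ) (q : ℝ) : EuclideanSpace ℝ (Fin (n + 1)) :=
  WithLp.toLp 2 fun i => q ^ ((i : ℕ) + 1)

/-- The gradient of `Qfun 1 (1 - q)` at `geomVec n q` is `-(1 - q)² (q^i)_i`
(summation by parts). -/
theorem geomVec_linear_term {n : ℕ} (q : ℝ) (d : EuclideanSpace ℝ (Fin (n + 1))) :
    (geomVec n q 0 - 1) * d 0
      + ∑ t : Fin n, (geomVec n q t.succ - geomVec n q t.castSucc) * (d t.succ - d t.castSucc)
      + (1 - q) * geomVec n q (Fin.last n) * d (Fin.last n)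
    = -(1 - q) ^ 2 * ∑ i : Fin (n + 1), q ^ (i : ℕ) * d i := by
  have hstep : ∀ t : Fin n,
      (geomVec n q t.succ - geomVec n q t.castSucc) * (d t.succ - d t.castSucc)
        = (q - 1) * (q ^ (t.succ : ℕ) * d t.succ - q ^ (t.castSucc : ℕ) * d t.castSucc)
          - (1 - q) ^ 2 * (q ^ (t.castSucc : ℕ) * d t.castSucc) := by
    intro t
    simp only [geomVec, Fin.val_succ, Fin.val_castSucc]
    ring
  rw [sum_congr rfl fun t _ => hstep t, sum_sub_distrib, ← mul_sum, ← mul_sum,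
    Fin.sum_univ_succ_sub_castSucc (fun i => q ^ (i : ℕ) * d i), Fin.sum_univ_castSucc]
  simp only [geomVec, Fin.val_last, Fin.val_zero]
  ring

theorem inner_geomVec {n : ℕ} (q : ℝ) (d : EuclideanSpace ℝ (Fin (n + 1))) :
    ⟪geomVec n q, d⟫ = q * ∑ i : Fin (n + 1), q ^ (i : ℕ) * d i := by
  simp only [PiLp.inner_apply, geomVec, mul_sum]
  exact sum_congr rfl fun i _ => by simp only [RCLike.inner_apply, Real.ringHom_apply]; ring

noncomputable def nesterovRatio (α : ℝ) : ℝ := (1 - √α) / (1 + √α)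

theorem one_sub_nesterovRatio (α : ℝ) : 1 - nesterovRatio α = 2 * √α / (√α + 1) := by
  have : 0 < 1 + √α := by positivity
  rw [nesterovRatio]
  field_simp
  ring

theorem nesterovRatio_nonneg {α : ℝ} (hα : α ≤ 1) : 0 ≤ nesterovRatio α :=
  div_nonneg (sub_nonneg.2 (Real.sqrt_le_one.2 hα)) (by positivity)

theorem nesterovRatio_le_one (α : ℝ) : nesterovRatio α ≤ 1 :=
  div_le_one_of_le₀ (by linarith [Real.sqrt_nonneg α]) (by positivity)

theorem nesterovRatio_relation {α : ℝ} (hα : 0 ≤ α) :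
    (1 - α) * (1 - nesterovRatio α) ^ 2 = 4 * α * nesterovRatio α := by
  have : 0 < 1 + √α := by positivity
  have hsq := Real.sq_sqrt hα
  rw [nesterovRatio]
  field_simp
  linear_combination 4 * hsq

theorem fNsc_geomVec_add {n : ℕ} {α : ℝ} (hα : 0 ≤ α)
    (d : EuclideanSpace ℝ (Fin (n + 1))) :
    fNsc α (geomVec n (nesterovRatio α) + d) = fNsc α (geomVec n (nesterovRatio α))
      + (1 - α) / 4 * (1 / 2 * d 0 ^ 2 + 1 / 2 * ∑ t : Fin n, (d t.succ - d t.castSucc) ^ 2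
        + (1 - nesterovRatio α) / 2 * d (Fin.last n) ^ 2)
      + α / 2 * ‖d‖ ^ 2 := by
  have hlin := geomVec_linear_term (nesterovRatio α) d
  rw [fNsc, fNsc, Qfun_add_s4, norm_add_sq_real, inner_geomVec, ← one_sub_nesterovRatio]
  linear_combination (1 - α) / 4 * hlin
    - (∑ i : Fin (n + 1), nesterovRatio α ^ (i : ℕ) * d i) / 4 * nesterovRatio_relation hα

theorem fNsc_geomVec_add_sq_norm_sub_le {n : ℕ} {α : ℝ} (hα0 : 0 ≤ α) (hα1 : α ≤ 1)
    (x : EuclideanSpace ℝ (Fin (n + 1))) :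
    fNsc α (geomVec n (nesterovRatio α)) + α / 2 * ‖x - geomVec n (nesterovRatio α)‖ ^ 2
      ≤ fNsc α x := by
  set d := x - geomVec n (nesterovRatio α)
  have hlast : 0 ≤ (1 - nesterovRatio α) / 2 * d (Fin.last n) ^ 2 :=
    mul_nonneg (by linarith [nesterovRatio_le_one α]) (sq_nonneg _)
  have hform : 0 ≤ (1 - α) / 4 * (1 / 2 * d 0 ^ 2
      + 1 / 2 * ∑ t : Fin n, (d t.succ - d t.castSucc) ^ 2
      + (1 - nesterovRatio α) / 2 * d (Fin.last n) ^ 2) :=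
    mul_nonneg (by linarith) (by positivity)
  have hx : x = geomVec n (nesterovRatio α) + d := (add_sub_cancel _ _).symm
  rw [hx, fNsc_geomVec_add hα0]
  linarith

theorem iInf_fNsc_eq {n : ℕ} {α : ℝ} (hα0 : 0 ≤ α) (hα1 : α ≤ 1) :
    ⨅ z : EuclideanSpace ℝ (Fin (n + 1)), fNsc α z =
      fNsc α (geomVec n (nesterovRatio α)) := by
  have hmin (z : EuclideanSpace ℝ (Fin (n + 1))) :
      fNsc α (geomVec n (nesterovRatio α)) ≤ fNsc α z :=
    (le_add_of_nonneg_right (mul_nonneg (by linarith) (sq_nonneg _))).trans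
      (fNsc_geomVec_add_sq_norm_sub_le hα0 hα1 z)
  exact IsGLB.ciInf_eq (IsLeast.isGLB ⟨⟨_, rfl⟩, Set.forall_mem_range.2 hmin⟩)

/-- for `0 < α ≤ 1`, `q = (1-√α)/(1+√α)`, and any `x ∈ ℝ^m` (here `m = n+1`)
whose last coordinate vanishes, `f_Nsc(x) - inf f_Nsc ≥ (α/2)·q^{2m+2}`. -/
theorem fNsc_lower_gap_of_last_coord_zero (n : ℕ) (α : ℝ) (hα0 : 0 < α) (hα1 : α ≤ 1)
    (x : EuclideanSpace ℝ (Fin (n + 1))) (hx : x (Fin.last n) = 0) :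
    fNsc α x - ⨅ z : EuclideanSpace ℝ (Fin (n + 1)), fNsc α z ≥
      α / 2 * ((1 - Real.sqrt α) / (1 + Real.sqrt α)) ^ (2 * (n + 1) + 2) := by
  change _ ≥ α / 2 * nesterovRatio α ^ (2 * (n + 1) + 2)
  set q := nesterovRatio α
  set c := geomVec n q
  have hdist : q ^ (2 * (n + 1)) ≤ ‖x - c‖ ^ 2 := by
    have hcoord : (x - c) (Fin.last n) = -q ^ (n + 1) := by simp [c, geomVec, hx]
    calc q ^ (2 * (n + 1)) = ‖(x - c) (Fin.last n)‖ ^ 2 := by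
          rw [hcoord, Real.norm_eq_abs, sq_abs]; ring
      _ ≤ ‖x - c‖ ^ 2 := pow_le_pow_left₀ (norm_nonneg _) (PiLp.norm_apply_le _ _) 2
  have hpow : q ^ (2 * (n + 1) + 2) ≤ q ^ (2 * (n + 1)) :=
    pow_le_pow_of_le_one (nesterovRatio_nonneg hα1) (nesterovRatio_le_one α) (by omega)
  rw [iInf_fNsc_eq hα0.le hα1]
  calc α / 2 * q ^ (2 * (n + 1) + 2) ≤ α / 2 * ‖x - c‖ ^ 2 := by
        gcongr; exact hpow.trans hdist
    _ ≤ fNsc α x - fNsc α c := by linarith [fNsc_geomVec_add_sq_norm_sub_le hα0.le hα1 x]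
end

section
/- Let g: ℝ^m → ℝ be (ξ, ζ)-smooth with 0 ≤ |ξ| ≤ ζ, and let U^{(1)}, …, U^{(n)} ∈ ℝ^{m×mn} satisfy U^{(i)}(U^{(i)})ᵀ = I and U^{(i)}(U^{(j)})ᵀ = 0 for i ≠ j. Define ḡ_i(x) := √n · g(U^{(i)}x) on ℝ^{mn}. Then {ḡ_i}_{i=1}^n is ζ-average-smooth: (1/n)∑_{i=1}^n ‖∇ḡ_i(x) - ∇ḡ_i(y)‖₂² ≤ ζ²‖x - y‖₂² for all x, y ∈ ℝ^{mn}. -/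
/-!
The gradient of `ḡᵢ` at `x` is `√n · Uᵢᵀ ∇g(Uᵢ x)`, and `Uᵢᵀ` does not increase norms, so
`‖∇ḡᵢ x - ∇ḡᵢ y‖² ≤ n ζ² ‖Uᵢ (x - y)‖²` once `∇g` is known to be `ζ`-Lipschitz; summing over `i`,
Bessel's inequality for the orthonormal rows of all the `Uᵢ` bounds `∑ᵢ ‖Uᵢ (x - y)‖²` by `‖x - y‖²`.

For the Lipschitz bound, `g - (ξ/2)‖·‖²` is convex and `(ζ - ξ)`-smooth, so co-coercivity gives
`⟪s - ξ d, s - ζ d⟫ ≤ 0` for `s = ∇g a - ∇g b` and `d = a - b`: the vector `s` lies in the ball of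
radius `(ζ - ξ)/2 ‖d‖` around `(ξ + ζ)/2 d`, which `|ξ| ≤ ζ` places inside the ball of radius `ζ ‖d‖`.
-/

open scoped RealInnerProductSpace

section Bregman

variable {E : Type*} [NormedAddCommGroup E] [InnerProductSpace ℝ E]

def bregman (f : E → ℝ) (f' : E → E) (p q : E) : ℝ := f p - f q - ⟪f' q, p - q⟫

lemma bregman_add_bregman_swap (f : E → ℝ) (f' : E → E) (p q : E) :
    bregman f f' p q + bregman f f' q p = ⟪f' p - f' q, p - q⟫ := by
  simp only [bregman, inner_sub_left, inner_sub_right]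
  ring

lemma bregman_sub_mul_norm_sq (f : E → ℝ) (f' : E → E) (ξ : ℝ) (p q : E) :
    bregman (fun x => f x - ξ / 2 * ‖x‖ ^ 2) (fun x => f' x - ξ • x) p q
      = bregman f f' p q - ξ / 2 * ‖p - q‖ ^ 2 := by
  simp only [bregman, norm_sub_sq_real, inner_sub_left, inner_sub_right, real_inner_smul_left,
    real_inner_self_eq_norm_sq, real_inner_comm q p]
  ring

variable {f : E → ℝ} {f' : E → E} {L : ℝ}

/-- Compare `f` at the test point `p - t • (f' p - f' q)` with its lower bound around `q` and
its upper bound around `p`. -/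
lemma mul_norm_sq_sub_le_bregman (hconvex : ∀ p q, 0 ≤ bregman f f' p q)
    (hsmooth : ∀ p q, bregman f f' p q ≤ L / 2 * ‖p - q‖ ^ 2) (p q : E) (t : ℝ) :
    (t - L / 2 * t ^ 2) * ‖f' p - f' q‖ ^ 2 ≤ bregman f f' p q := by
  set s := f' p - f' q
  have hlower := hconvex (p - t • s) q
  have hupper := hsmooth (p - t • s) p
  have hzq : p - t • s - q = (p - q) - t • s := by abel
  have hzp : p - t • s - p = -(t • s) := by abel
  have hs : t * ⟪f' p, s⟫ - t * ⟪f' q, s⟫ = t * ‖s‖ ^ 2 := by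
    rw [← mul_sub, ← inner_sub_left, real_inner_self_eq_norm_sq]
  simp only [bregman, hzq, hzp, inner_sub_right, inner_neg_right, real_inner_smul_right,
    norm_neg, norm_smul, mul_pow, Real.norm_eq_abs, sq_abs] at hlower hupper ⊢
  linarith

/-- Co-coercivity. Summing `mul_norm_sq_sub_le_bregman` over both orders gives a quadratic in `t`
that is nonnegative, so its discriminant is nonpositive; this avoids dividing by `L`. -/
lemma norm_sq_sub_le_mul_inner_of_bregman_le (hconvex : ∀ p q, 0 ≤ bregman f f' p q)
    (hsmooth : ∀ p q, bregman f f' p q ≤ L / 2 * ‖p - q‖ ^ 2) (a b : E) :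
    ‖f' a - f' b‖ ^ 2 ≤ L * ⟪f' a - f' b, a - b⟫ := by
  set s := f' a - f' b
  have hquadratic : ∀ t : ℝ,
      0 ≤ (L * ‖s‖ ^ 2) * (t * t) + (-2 * ‖s‖ ^ 2) * t + ⟪s, a - b⟫ := by
    intro t
    have hab := mul_norm_sq_sub_le_bregman hconvex hsmooth a b t
    have hba := mul_norm_sq_sub_le_bregman hconvex hsmooth b a t
    rw [norm_sub_rev] at hba
    have hsum := bregman_add_bregman_swap f f' a b
    nlinarith
  have hdiscrim := discrim_le_zero hquadratic
  rw [discrim] at hdiscrim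
  rcases eq_or_ne s 0 with hs | hs
  · simp [hs]
  · have : 0 < ‖s‖ ^ 2 := by positivity
    nlinarith

lemma inner_sub_smul_sub_smul_nonpos_of_bregman_bounds {ξ ζ : ℝ}
    (hbounds : ∀ p q, ξ / 2 * ‖p - q‖ ^ 2 ≤ bregman f f' p q ∧
      bregman f f' p q ≤ ζ / 2 * ‖p - q‖ ^ 2) (a b : E) :
    ⟪f' a - f' b - ξ • (a - b), f' a - f' b - ζ • (a - b)⟫ ≤ 0 := by
  have hcoco := norm_sq_sub_le_mul_inner_of_bregman_le (L := ζ - ξ)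
    (fun p q => by linarith [bregman_sub_mul_norm_sq f f' ξ p q, (hbounds p q).1])
    (fun p q => by linarith [bregman_sub_mul_norm_sq f f' ξ p q, (hbounds p q).2]) a b
  have hshift : f' a - ξ • a - (f' b - ξ • b) = f' a - f' b - ξ • (a - b) := by
    rw [smul_sub]; abel
  have hrhs : f' a - f' b - ζ • (a - b)
      = (f' a - f' b - ξ • (a - b)) - (ζ - ξ) • (a - b) := by
    rw [sub_smul]; abel
  rw [hshift] at hcoco
  rw [hrhs, inner_sub_right, real_inner_self_eq_norm_sq, real_inner_smul_right]
  linarith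

end Bregman

lemma norm_le_of_inner_sub_smul_sub_smul_nonpos {E : Type*} [NormedAddCommGroup E]
    [InnerProductSpace ℝ E] {s d : E} {ξ ζ : ℝ} (hξζ : |ξ| ≤ ζ)
    (h : ⟪s - ξ • d, s - ζ • d⟫ ≤ 0) : ‖s‖ ≤ ζ * ‖d‖ := by
  have hξ : ξ ≤ ζ := (le_abs_self ξ).trans hξζ
  have hξ' : 0 ≤ ξ + ζ := by linarith [neg_abs_le ξ]
  have hexpand : ⟪s - ξ • d, s - ζ • d⟫ = ‖s‖ ^ 2 - (ξ + ζ) * ⟪s, d⟫ + ξ * ζ * ‖d‖ ^ 2 := by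
    simp only [inner_sub_left, inner_sub_right, real_inner_smul_left, real_inner_smul_right,
      real_inner_self_eq_norm_sq, real_inner_comm s d]
    ring
  have hcs : (ξ + ζ) * ⟪s, d⟫ ≤ (ξ + ζ) * (‖s‖ * ‖d‖) :=
    mul_le_mul_of_nonneg_left (real_inner_le_norm s d) hξ'
  have hroots : (‖s‖ - ξ * ‖d‖) * (‖s‖ - ζ * ‖d‖) ≤ 0 := by nlinarith
  have hd : ξ * ‖d‖ ≤ ζ * ‖d‖ := mul_le_mul_of_nonneg_right hξ (norm_nonneg d)
  by_contra! hs
  nlinarith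

section InnerCoords

variable {E : Type*} [NormedAddCommGroup E] [InnerProductSpace ℝ E] {ι : Type*}

/-- Multiplication by the matrix with rows `v a`; for `v = u i` this is `U^{(i)}`. -/
noncomputable def innerCoords (v : ι → E) : E →L[ℝ] EuclideanSpace ℝ ι :=
  (EuclideanSpace.equiv ι ℝ).symm.toContinuousLinearMap.comp
    (ContinuousLinearMap.pi fun a => innerSL ℝ (v a))

lemma norm_innerCoords_sq [Fintype ι] (v : ι → E) (z : E) :
    ‖innerCoords v z‖ ^ 2 = ∑ a, ⟪v a, z⟫ ^ 2 :=
  EuclideanSpace.real_norm_sq_eq _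

lemma Orthonormal.sum_norm_innerCoords_sq_le [Fintype ι] {κ : Type*} [Fintype κ] {v : κ → ι → E}
    (hv : Orthonormal ℝ fun p : κ × ι => v p.1 p.2) (z : E) :
    ∑ i, ‖innerCoords (v i) z‖ ^ 2 ≤ ‖z‖ ^ 2 := by
  have hbessel := hv.sum_inner_products_le z (s := Finset.univ)
  simp only [Real.norm_eq_abs, sq_abs, Fintype.sum_prod_type] at hbessel
  simpa only [norm_innerCoords_sq] using hbessel

lemma Orthonormal.opNorm_innerCoords_le_one [Fintype ι] {v : ι → E} (hv : Orthonormal ℝ v) :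
    ‖innerCoords v‖ ≤ 1 := by
  refine ContinuousLinearMap.opNorm_le_bound _ zero_le_one fun z => ?_
  have hbessel := hv.sum_inner_products_le z (s := Finset.univ)
  simp only [Real.norm_eq_abs, sq_abs, ← norm_innerCoords_sq] at hbessel
  rw [one_mul]
  exact (pow_le_pow_iff_left₀ (norm_nonneg _) (norm_nonneg _) two_ne_zero).mp hbessel

end InnerCoords

section Gradient

variable {E F : Type*} [NormedAddCommGroup E] [InnerProductSpace ℝ E] [CompleteSpace E]
  [NormedAddCommGroup F] [InnerProductSpace ℝ F] [CompleteSpace F]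

lemma HasGradientAt.const_mul {f : E → ℝ} {f' x : E} (hf : HasGradientAt f f' x) (c : ℝ) :
    HasGradientAt (fun z => c * f z) (c • f') x := by
  rw [hasGradientAt_iff_hasFDerivAt, map_smul]
  exact hf.hasFDerivAt.const_mul c

lemma HasGradientAt.comp_continuousLinearMap {g : F → ℝ} {g' : F} {x : E} (A : E →L[ℝ] F)
    (hg : HasGradientAt g g' (A x)) :
    HasGradientAt (fun z => g (A z)) (ContinuousLinearMap.adjoint A g') x := by
  have hdual : InnerProductSpace.toDual ℝ E (ContinuousLinearMap.adjoint A g')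
      = (InnerProductSpace.toDual ℝ F g').comp A := by
    ext v
    simp [ContinuousLinearMap.adjoint_inner_left]
  rw [hasGradientAt_iff_hasFDerivAt, hdual]
  exact hg.hasFDerivAt.comp x A.hasFDerivAt

lemma norm_gradient_const_mul_comp_sub_le {g : F → ℝ} (hg : Differentiable ℝ g) {ζ : ℝ}
    (hlip : ∀ a b, ‖gradient g a - gradient g b‖ ≤ ζ * ‖a - b‖) (A : E →L[ℝ] F) (hA : ‖A‖ ≤ 1)
    (c : ℝ) (x y : E) :
    ‖gradient (fun z => c * g (A z)) x - gradient (fun z => c * g (A z)) y‖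
      ≤ |c| * (ζ * ‖A (x - y)‖) := by
  have hgrad : ∀ z, gradient (fun z => c * g (A z)) z
      = c • ContinuousLinearMap.adjoint A (gradient g (A z)) := fun z =>
    (((hg _).hasGradientAt.comp_continuousLinearMap A).const_mul c).gradient
  have hadjoint : ‖ContinuousLinearMap.adjoint A‖ ≤ 1 := by
    rwa [LinearIsometryEquiv.norm_map]
  rw [hgrad, hgrad, ← smul_sub, ← map_sub, norm_smul, Real.norm_eq_abs]
  gcongr
  calc _ ≤ ‖gradient g (A x) - gradient g (A y)‖ :=
        ((ContinuousLinearMap.adjoint A).le_of_opNorm_le hadjoint _).trans_eq (one_mul _)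
    _ ≤ ζ * ‖A (x - y)‖ := by rw [map_sub]; exact hlip _ _

end Gradient

theorem orthogonal_embedding_average_smooth_general (m n : ℕ) (ξ ζ : ℝ)
    (hξζ : |ξ| ≤ ζ)
    (g : EuclideanSpace ℝ (Fin m) → ℝ) (hg : Differentiable ℝ g)
    (hsmooth : ∀ x y : EuclideanSpace ℝ (Fin m),
      ξ / 2 * ‖x - y‖ ^ 2 ≤ g x - g y - ⟪gradient g y, x - y⟫ ∧
        g x - g y - ⟪gradient g y, x - y⟫ ≤ ζ / 2 * ‖x - y‖ ^ 2)
    (u : Fin n → Fin m → EuclideanSpace ℝ (Fin (m * n)))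
    (hU : ∀ (i j : Fin n) (a b : Fin m),
      ⟪u i a, u j b⟫ = if i = j ∧ a = b then (1 : ℝ) else 0)
    (x y : EuclideanSpace ℝ (Fin (m * n))) :
    (1 / (n : ℝ)) * ∑ i : Fin n,
        ‖gradient (fun z : EuclideanSpace ℝ (Fin (m * n)) =>
            Real.sqrt n * g (WithLp.toLp 2 (fun a => ⟪u i a, z⟫) : EuclideanSpace ℝ (Fin m))) x
          - gradient (fun z : EuclideanSpace ℝ (Fin (m * n)) =>
            Real.sqrt n * g (WithLp.toLp 2 (fun a => ⟪u i a, z⟫) : EuclideanSpace ℝ (Fin m))) y‖ ^ 2 ≤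
      ζ ^ 2 * ‖x - y‖ ^ 2 := by
  have horth : Orthonormal ℝ fun p : Fin n × Fin m => u p.1 p.2 := by
    rw [orthonormal_iff_ite]
    rintro ⟨i, a⟩ ⟨j, b⟩
    simp [hU, Prod.ext_iff]
  have hlip : ∀ a b, ‖gradient g a - gradient g b‖ ≤ ζ * ‖a - b‖ := fun a b =>
    norm_le_of_inner_sub_smul_sub_smul_nonpos hξζ
      (inner_sub_smul_sub_smul_nonpos_of_bregman_bounds hsmooth a b)
  set A := fun i => innerCoords (u i)
  calc (1 / (n : ℝ)) * _
      ≤ (1 / (n : ℝ)) * ∑ i, n * (ζ ^ 2 * ‖A i (x - y)‖ ^ 2) := by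
        gcongr with i
        have hA : ‖A i‖ ≤ 1 :=
          (horth.comp _ (Prod.mk_right_injective i)).opNorm_innerCoords_le_one
        calc _ ≤ (|Real.sqrt n| * (ζ * ‖A i (x - y)‖)) ^ 2 := by
              gcongr
              exact norm_gradient_const_mul_comp_sub_le hg hlip (A i) hA _ x y
          _ = n * (ζ ^ 2 * ‖A i (x - y)‖ ^ 2) := by
              rw [mul_pow, sq_abs, Real.sq_sqrt n.cast_nonneg, mul_pow]
    _ = (1 / (n : ℝ)) * (n * (ζ ^ 2 * ∑ i, ‖A i (x - y)‖ ^ 2)) := by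
        simp only [Finset.mul_sum]
    _ ≤ ζ ^ 2 * ∑ i, ‖A i (x - y)‖ ^ 2 := by
        rw [← mul_assoc, one_div]
        exact mul_le_of_le_one_left (by positivity) inv_mul_le_one
    _ ≤ ζ ^ 2 * ‖x - y‖ ^ 2 := by
        gcongr
        exact horth.sum_norm_innerCoords_sq_le _

/-- if `g` is `(ξ, ζ)`-smooth with `|ξ| ≤ ζ` and the matrices `U^{(i)}`
(given by their rows `u i a ∈ ℝ^{mn}`) have mutually orthogonal orthonormal rows, then the
family `ḡ_i(x) = √n · g(U^{(i)}x)` is `ζ`-average smooth. -/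
theorem orthogonal_embedding_average_smooth (m n : ℕ) (hn : 0 < n) (ξ ζ : ℝ)
    (hξζ : |ξ| ≤ ζ)
    (g : EuclideanSpace ℝ (Fin m) → ℝ) (hg : Differentiable ℝ g)
    (hsmooth : ∀ x y : EuclideanSpace ℝ (Fin m),
      ξ / 2 * ‖x - y‖ ^ 2 ≤ g x - g y - ⟪gradient g y, x - y⟫ ∧
        g x - g y - ⟪gradient g y, x - y⟫ ≤ ζ / 2 * ‖x - y‖ ^ 2)
    (u : Fin n → Fin m → EuclideanSpace ℝ (Fin (m * n)))
    (hU : ∀ (i j : Fin n) (a b : Fin m),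
      ⟪u i a, u j b⟫ = if i = j ∧ a = b then (1 : ℝ) else 0)
    (x y : EuclideanSpace ℝ (Fin (m * n))) :
    (1 / (n : ℝ)) * ∑ i : Fin n,
        ‖gradient (fun z : EuclideanSpace ℝ (Fin (m * n)) =>
            Real.sqrt n * g (WithLp.toLp 2 (fun a => ⟪u i a, z⟫) : EuclideanSpace ℝ (Fin m))) x
          - gradient (fun z : EuclideanSpace ℝ (Fin (m * n)) =>
            Real.sqrt n * g (WithLp.toLp 2 (fun a => ⟪u i a, z⟫) : EuclideanSpace ℝ (Fin m))) y‖ ^ 2 ≤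
      ζ ^ 2 * ‖x - y‖ ^ 2 :=
  orthogonal_embedding_average_smooth_general m n ξ ζ hξζ g hg hsmooth u hU x y
end
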